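/- Let k ≥ 4 be an integer and let z satisfy δ_k < z < r_k, where δ_k = arsinh(cot(2π/k)) and r_k = arsinh(cot(π/k)). Set x_z = φ_k(sinh z) = (1 − sinh z·tan(π/k))/(sinh z + tan(π/k)) and W_z(x) = (x·sinh z − 1)/(x + sinh z). Then x_z ∈ (0, tan(π/k)) and ∫₀^{x_z} ( ∫_{−1/x}^{W_z(x)} (x − y)^{−2} dy ) dx + ∫_{x_z}^{tan(π/k)} ( ∫_{−1/x}^{−tan(π/k)} (x − y)^{−2} dy ) dx = sinh z · arctan(φ_k(sinh z)) + log(2·cosh z·sin(π/k)·cos(π/k)). -/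

import Mathlib

open Real MeasureTheory intervalIntegral

lemma inner_int (x a b : ℝ) (hab : a ≤ b) (hbx : b < x) :
    ∫ y in a..b, 1 / (x - y) ^ 2 = 1 / (x - b) - 1 / (x - a) := by
  have key : ∀ y ∈ Set.uIcc a b, HasDerivAt (fun t => (x - t)⁻¹) (1 / (x - y) ^ 2) y := by
    intro y hy
    rw [Set.uIcc_of_le hab] at hy
    have hyx : y < x := lt_of_le_of_lt hy.2 hbx
    have hxy : x - y ≠ 0 := (sub_pos.mpr hyx).ne'
    have h1 : HasDerivAt (fun t : ℝ => x - t) (-1) y := (hasDerivAt_id y).const_sub x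
    have h2 := h1.inv hxy
    refine h2.congr_deriv ?_
    ring
  have hint : IntervalIntegrable (fun y => 1 / (x - y) ^ 2) volume a b := by
    apply ContinuousOn.intervalIntegrable
    apply ContinuousOn.div continuousOn_const (by fun_prop)
    intro y hy
    rw [Set.uIcc_of_le hab] at hy
    have hyx : y < x := lt_of_le_of_lt hy.2 hbx
    exact pow_ne_zero 2 (sub_pos.mpr hyx).ne'
  rw [integral_eq_sub_of_hasDerivAt key hint, one_div, one_div]

set_option maxHeartbeats 1000000 in
/-- For `k ≥ 4` and `δ_k < z < r_k`, with `x_z = φ_k (sinh z)` one has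
`x_z ∈ (0, tan (π/k))` and the sum of the iterated integrals
`∫₀^{x_z} ∫_{-1/x}^{W_z(x)} (x-y)⁻² dy dx` and
`∫_{x_z}^{tan (π/k)} ∫_{-1/x}^{-tan (π/k)} (x-y)⁻² dy dx` equals
`sinh z · arctan (φ_k (sinh z)) + log (2 cosh z · sin (π/k) · cos (π/k))`, where
`W_z(x) = (x sinh z - 1)/(x + sinh z)` and `φ_k t = (1 - t tan (π/k))/(t + tan (π/k))`. -/
theorem iterated_integral_middle (k : ℕ) (hk : 4 ≤ k) (z : ℝ)
    (hz1 : Real.arsinh (Real.cot (2 * π / k)) < z)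
    (hz2 : z < Real.arsinh (Real.cot (π / k))) :
    (1 - Real.sinh z * Real.tan (π / k)) / (Real.sinh z + Real.tan (π / k)) ∈
        Set.Ioo 0 (Real.tan (π / k)) ∧
      (∫ x in (0 : ℝ)..((1 - Real.sinh z * Real.tan (π / k)) /
            (Real.sinh z + Real.tan (π / k))),
          ∫ y in (-1 / x)..((x * Real.sinh z - 1) / (x + Real.sinh z)),
            1 / (x - y) ^ 2) +
        (∫ x in ((1 - Real.sinh z * Real.tan (π / k)) /
            (Real.sinh z + Real.tan (π / k)))..Real.tan (π / k),
          ∫ y in (-1 / x)..(-Real.tan (π / k)), 1 / (x - y) ^ 2) =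
      Real.sinh z *
          Real.arctan ((1 - Real.sinh z * Real.tan (π / k)) /
            (Real.sinh z + Real.tan (π / k))) +
        Real.log (2 * Real.cosh z * Real.sin (π / k) * Real.cos (π / k)) := by
  set s := Real.sinh z with hs_def
  set T := Real.tan (π / k) with hT_def
  have hk4 : (4:ℝ) ≤ (k:ℝ) := by exact_mod_cast hk
  have hθ0 : 0 < π / k := by positivity
  have hθ4 : π / k ≤ π / 4 := div_le_div_of_nonneg_left pi_pos.le (by norm_num) hk4
  have hθ2 : π / k < π / 2 := lt_of_le_of_lt hθ4 (by linarith [pi_pos])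
  have hcθ : 0 < Real.cos (π / k) := Real.cos_pos_of_mem_Ioo ⟨by linarith, hθ2⟩
  have hsθ : 0 < Real.sin (π / k) := Real.sin_pos_of_pos_of_lt_pi hθ0 (by linarith [pi_pos])
  have hT0 : 0 < T := Real.tan_pos_of_pos_of_lt_pi_div_two hθ0 hθ2
  have hT1 : T ≤ 1 := by
    rcases eq_or_lt_of_le hθ4 with h | h
    · rw [hT_def, h, Real.tan_pi_div_four]
    · have := Real.tan_lt_tan_of_nonneg_of_lt_pi_div_two hθ0.le (by linarith [pi_pos]) h
      rw [Real.tan_pi_div_four] at this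
      exact this.le
  have hcot1 : Real.cot (π / k) = 1 / T := by
    rw [Real.cot_eq_cos_div_sin, hT_def, Real.tan_eq_sin_div_cos, one_div_div]
  have hs1 : s < 1 / T := by
    rw [← hcot1, ← Real.sinh_arsinh (Real.cot (π / k))]
    exact Real.sinh_lt_sinh.mpr hz2
  have hsT1 : s * T < 1 := (lt_div_iff₀ hT0).mp hs1
  have hcot2 : Real.cot (2 * π / k) = (1 - T ^ 2) / (2 * T) := by
    have h2θ : 2 * π / (k:ℝ) = 2 * (π / k) := by ring
    rw [h2θ, Real.cot_eq_cos_div_sin, Real.cos_two_mul, Real.sin_two_mul, hT_def,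
      Real.tan_eq_sin_div_cos]
    have pyth := Real.sin_sq_add_cos_sq (π / k)
    field_simp
    linear_combination pyth
  have hcot : (1 - T ^ 2) / (2 * T) < s := by
    rw [← hcot2, ← Real.sinh_arsinh (Real.cot (2 * π / k))]
    exact Real.sinh_lt_sinh.mpr hz1
  have hs0 : 0 < s := lt_of_le_of_lt (div_nonneg (by nlinarith) (by linarith)) hcot
  have hsT : 0 < s + T := by linarith
  have h2sT : 1 - T ^ 2 < 2 * s * T := by
    have := (div_lt_iff₀ (by linarith : (0:ℝ) < 2 * T)).mp hcot
    linarith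
  set X := (1 - s * T) / (s + T) with hX_def
  have hX0 : 0 < X := div_pos (by nlinarith) hsT
  have hXT : X < T := by
    rw [hX_def, div_lt_iff₀ hsT]
    nlinarith
  refine ⟨⟨hX0, hXT⟩, ?_⟩
  -- first integral
  have hcong1 : ∀ᵐ x ∂(volume : Measure ℝ), x ∈ Set.uIoc (0:ℝ) X →
      (∫ y in (-1/x)..((x*s-1)/(x+s)), 1/(x-y)^2) = s * (1/(1+x^2)) := by
    filter_upwards with x hx
    rw [Set.uIoc_of_le hX0.le] at hx
    have hx0 : 0 < x := hx.1
    have hxs : 0 < x + s := by linarith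
    have hab : -1/x ≤ (x*s-1)/(x+s) := by
      rw [div_le_div_iff₀ hx0 hxs]; nlinarith [mul_pos (mul_pos hx0 hx0) hs0]
    have hbx : (x*s-1)/(x+s) < x := by
      rw [div_lt_iff₀ hxs]; nlinarith
    rw [inner_int x _ _ hab hbx]
    have h1 : x - (x*s-1)/(x+s) = (1+x^2)/(x+s) := by
      field_simp; ring
    have h2 : x - (-1/x) = (1+x^2)/x := by
      field_simp; ring
    rw [h1, h2]
    have hp : (0:ℝ) < 1 + x^2 := by positivity
    field_simp
    ring
  have hI1 : (∫ x in (0:ℝ)..X, ∫ y in (-1/x)..((x*s-1)/(x+s)), 1/(x-y)^2)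
      = s * Real.arctan X := by
    rw [intervalIntegral.integral_congr_ae hcong1,
      intervalIntegral.integral_const_mul, integral_one_div_one_add_sq,
      Real.arctan_zero, sub_zero]
  -- second integral
  have hderiv : ∀ x ∈ Set.uIcc X T,
      HasDerivAt (fun x => Real.log (x + T) - Real.log (1 + x^2) / 2)
        (1/(x+T) - x/(1+x^2)) x := by
    intro x hx
    rw [Set.uIcc_of_le hXT.le] at hx
    have hx0 : 0 < x := lt_of_lt_of_le hX0 hx.1
    have hxT : 0 < x + T := by linarith
    have h1 : HasDerivAt (fun x : ℝ => Real.log (x + T)) ((x+T)⁻¹ * 1) x :=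
      (Real.hasDerivAt_log hxT.ne').comp (h := fun x : ℝ => x + T) x ((hasDerivAt_id x).add_const T)
    have h2 : HasDerivAt (fun x : ℝ => 1 + x^2) (2*x) x := by
      simpa using (hasDerivAt_pow 2 x).const_add 1
    have h3 : HasDerivAt (fun x : ℝ => Real.log (1 + x^2)) ((1+x^2)⁻¹ * (2*x)) x :=
      (Real.hasDerivAt_log (by positivity)).comp x h2
    have h4 := h1.sub (h3.div_const 2)
    refine h4.congr_deriv ?_
    have hp : (0:ℝ) < 1 + x^2 := by positivity
    ring
  have hI2 : (∫ x in X..T, ∫ y in (-1/x)..(-T), 1/(x-y)^2)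
      = (Real.log (T + T) - Real.log (1 + T^2) / 2)
        - (Real.log (X + T) - Real.log (1 + X^2) / 2) := by
    rw [intervalIntegral.integral_congr (g := fun x => 1/(x+T) - x/(1+x^2)) ?_]
    · exact integral_eq_sub_of_hasDerivAt hderiv (by
        apply ContinuousOn.intervalIntegrable
        apply ContinuousOn.sub
        · apply ContinuousOn.div continuousOn_const (by fun_prop)
          intro x hx
          rw [Set.uIcc_of_le hXT.le] at hx
          have : 0 < x := lt_of_lt_of_le hX0 hx.1
          positivity
        · apply ContinuousOn.div (by fun_prop) (by fun_prop)
          intro x _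
          positivity)
    · intro x hx
      rw [Set.uIcc_of_le hXT.le] at hx
      have hx0 : 0 < x := lt_of_lt_of_le hX0 hx.1
      have hab : -1/x ≤ -T := by
        rw [div_le_iff₀ hx0]
        nlinarith [hx.2]
      have hbx : -T < x := by linarith
      dsimp only
      rw [inner_int x _ _ hab hbx]
      have h2 : x - (-1/x) = (1+x^2)/x := by field_simp; ring
      have h1 : x - (-T) = x + T := by ring
      rw [h1, h2]
      have hp : (0:ℝ) < 1 + x^2 := by positivity
      have hxT : 0 < x + T := by linarith
      field_simp
  rw [hI1, hI2]
  congr 1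
  -- logarithm algebra
  set c := Real.cosh z with hc_def
  have hc0 : 0 < c := Real.cosh_pos z
  have hc2 : c ^ 2 = 1 + s ^ 2 := by rw [hc_def, Real.cosh_sq]; ring
  have hP1 : (0:ℝ) < 1 + T^2 := by positivity
  have e2 : X + T = (1 + T^2) / (s + T) := by
    rw [hX_def]; field_simp; ring
  have e3 : 1 + X^2 = c^2 * (1 + T^2) / (s + T)^2 := by
    rw [hX_def, hc2]; field_simp; ring
  have e4 : (T + T) / (1 + T^2) = 2 * Real.sin (π/k) * Real.cos (π/k) := by
    rw [div_eq_iff hP1.ne', hT_def, Real.tan_eq_sin_div_cos]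
    have pyth := Real.sin_sq_add_cos_sq (π / k)
    field_simp
    linear_combination (-2) * pyth
  have harg : 2 * c * Real.sin (π/k) * Real.cos (π/k) = (T + T) / (1 + T^2) * c := by
    rw [e4]; ring
  rw [e2, e3, Real.log_div hP1.ne' hsT.ne',
    Real.log_div (by positivity) (by positivity), Real.log_mul (by positivity) hP1.ne',
    Real.log_pow, Real.log_pow]
  rw [harg, Real.log_mul (by positivity) hc0.ne', Real.log_div (by positivity) hP1.ne']
  push_cast
  ring
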